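/- Let p, q ≥ 2 with n = p + q + 1. Then the complement Ω := S^n ∖ (S^p ∪ S^q) of the two complementary great subspheres is a simply connected topological space. -/

import Mathlib

noncomputable section

open Set

/-- The great `p`-sphere `S^p = {v ∈ S^n : y(v) = 0}`, where `y(v)` is the
`ℝ^{q+1}`-component (coordinates of 0-based index `≥ p+1`). -/
def greatSphereP (n p : ℕ) : Set (EuclideanSpace ℝ (Fin (n + 1))) :=
  {v | ‖v‖ = 1 ∧ ∀ k : Fin (n + 1), p + 1 ≤ (k : ℕ) → v k = 0}

/-- The great `q`-sphere `S^q = {v ∈ S^n : x(v) = 0}`, where `x(v)` is the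
`ℝ^{p+1}`-component (coordinates of 0-based index `< p+1`). -/
def greatSphereQ (n p : ℕ) : Set (EuclideanSpace ℝ (Fin (n + 1))) :=
  {v | ‖v‖ = 1 ∧ ∀ k : Fin (n + 1), (k : ℕ) < p + 1 → v k = 0}

/-- `Ω := S^n ∖ (S^p ∪ S^q)` with its subspace topology. -/
def Omega (n p : ℕ) : Set (EuclideanSpace ℝ (Fin (n + 1))) :=
  {v | ‖v‖ = 1} \ (greatSphereP n p ∪ greatSphereQ n p)

/-!
Writing `v = (x, y)` with `‖x‖² + ‖y‖² = 1`, the map `v ↦ (x / ‖x‖, y / ‖y‖, ‖x‖)` identifies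
`Ω` with `S^p × S^q × (0, 1)`, so it suffices that spheres of dimension at least two are simply
connected. For those, van Kampen applies to the complements of two antipodal points: each is a
Euclidean space by stereographic projection, and their intersection is a punctured Euclidean
space of dimension at least two, hence path connected.
-/

open unitInterval Metric Module NormedSpace

section SimplyConnected

variable {X : Type*} [TopologicalSpace X]

theorem IsSimplyConnected.homotopic_of_forall_mem {S : Set X} (hS : IsSimplyConnected S)
    {x y : X} {p q : Path x y} (hp : ∀ t, p t ∈ S) (hq : ∀ t, q t ∈ S) : p.Homotopic q := by
  have := hS.simplyConnectedSpace
  let restrict (γ : Path x y) (hγ : ∀ t, γ t ∈ S) :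
      Path (⟨x, by simpa using hp 0⟩ : S) ⟨y, by simpa using hp 1⟩ :=
    { toFun t := ⟨γ t, hγ t⟩
      source' := by simp
      target' := by simp }
  exact (SimplyConnectedSpace.paths_homotopic (restrict p hp) (restrict q hq)).map
    ⟨_, continuous_subtype_val⟩

open Path.Homotopic.Quotient in
theorem simplyConnectedSpace_of_homotopic_refl [PathConnectedSpace X] (x₀ : X)
    (h : ∀ γ : Path x₀ x₀, γ.Homotopic (Path.refl x₀)) : SimplyConnectedSpace X := by
  rw [simply_connected_iff_loops_nullhomotopic]
  refine ⟨‹_›, fun x γ => ?_⟩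
  let α := PathConnectedSpace.somePath x₀ x
  have hconj := h ((α.trans γ).trans α.symm)
  rw [← Path.Homotopic.Quotient.eq] at hconj ⊢
  simp only [mk_trans, mk_symm, mk_refl] at hconj ⊢
  calc mk γ = ((mk α).symm.trans (mk α)).trans ((mk γ).trans ((mk α).symm.trans (mk α))) := by
        simp
    _ = (mk α).symm.trans ((((mk α).trans (mk γ)).trans (mk α).symm).trans (mk α)) := by
        simp only [trans_assoc]
    _ = refl x := by simp [hconj]

instance Prod.instSimplyConnectedSpace {Y : Type*} [TopologicalSpace Y] [SimplyConnectedSpace X]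
    [SimplyConnectedSpace Y] : SimplyConnectedSpace (X × Y) := by
  rw [simply_connected_iff_paths_homotopic]
  refine ⟨inferInstance, fun a b => ⟨fun P Q => ?_⟩⟩
  rw [← Path.Homotopic.prod_projLeft_projRight P, ← Path.Homotopic.prod_projLeft_projRight Q,
    Subsingleton.elim (Path.Homotopic.projLeft P), Subsingleton.elim (Path.Homotopic.projRight P)]

end SimplyConnected

section VanKampen

variable {X : Type*} [TopologicalSpace X]

theorem Path.trans_mem_of_forall_mem {S : Set X} {a b c : X} {γ₁ : Path a b} {γ₂ : Path b c}
    (h₁ : ∀ t, γ₁ t ∈ S) (h₂ : ∀ t, γ₂ t ∈ S) (t : I) : γ₁.trans γ₂ t ∈ S :=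
  union_subset (range_subset_iff.2 h₁) (range_subset_iff.2 h₂)
    (Path.trans_range γ₁ γ₂ ▸ mem_range_self t)

theorem Path.homotopic_trans_subpath_of_forall_mem {a b c : X} (γ : Path a b) (t : ℕ → I)
    {S : ℕ → Set X} (hS : ∀ m, IsSimplyConnected (S m))
    (hγ : ∀ m s, γ.subpath (t m) (t (m + 1)) s ∈ S m) (β : ∀ m, Path c (γ (t m)))
    (hβ : ∀ m s, β m s ∈ S m) (hβ' : ∀ m s, β (m + 1) s ∈ S m) (m : ℕ) :
    ((β 0).trans (γ.subpath (t 0) (t m))).Homotopic (β m) := by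
  induction m with
  | zero => simpa using Path.Homotopic.trans_refl (β 0)
  | succ m ih =>
    have hsplit : ((β 0).trans (γ.subpath (t 0) (t (m + 1)))).Homotopic
        (((β 0).trans (γ.subpath (t 0) (t m))).trans (γ.subpath (t m) (t (m + 1)))) :=
      (Path.Homotopic.hcomp (.refl _) ⟨(Path.Homotopy.subpathTransSubpath γ _ _ _).symm⟩).trans
        (Path.Homotopic.trans_assoc _ _ _).symm
    have hstep : ((β m).trans (γ.subpath (t m) (t (m + 1)))).Homotopic (β (m + 1)) :=
      (hS m).homotopic_of_forall_mem (Path.trans_mem_of_forall_mem (hβ m) (hγ m)) (hβ' m)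
    exact hsplit.trans ((ih.hcomp (.refl _)).trans hstep)

-- `u = 0` and `v = 1` are hypotheses because where this is applied they hold only
-- propositionally, while the type of `β` mentions `u` and `v`.
theorem Path.homotopic_of_homotopic_subpath {S : Set X} (hS : IsSimplyConnected S) {a b : X}
    {γ q : Path a b} (hq : ∀ s, q s ∈ S) {u v : I} (hu : u = 0) (hv : v = 1)
    {β : Path (γ u) (γ v)} (hβ : ∀ s, β s ∈ S) (h : (γ.subpath u v).Homotopic β) :
    γ.Homotopic q := by
  subst hu hv
  rw [Path.subpath_zero_one] at h
  exact (h.trans (hS.homotopic_of_forall_mem (q := q.cast γ.source γ.target) hβ hq)).pathCast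
    γ.source.symm γ.target.symm

variable {U V : Set X}

theorem isPathConnected_cond_inter_cond (hU : IsPathConnected U) (hV : IsPathConnected V)
    (hUV : IsPathConnected (U ∩ V)) (i j : Bool) :
    IsPathConnected ((bif i then U else V) ∩ (bif j then U else V)) := by
  cases i <;> cases j <;> simpa [inter_comm]

theorem homotopic_refl_of_isOpen_cover (hUo : IsOpen U) (hVo : IsOpen V)
    (hcover : U ∪ V = univ) (hU : IsSimplyConnected U) (hV : IsSimplyConnected V)
    (hUV : IsPathConnected (U ∩ V)) {x₀ : X} (hx₀ : x₀ ∈ U ∩ V) (γ : Path x₀ x₀) :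
    γ.Homotopic (Path.refl x₀) := by
  let W (i : Bool) : Set X := bif i then U else V
  have hWo (i : Bool) : IsOpen (W i) := by cases i <;> assumption
  have hWsc (i : Bool) : IsSimplyConnected (W i) := by cases i <;> assumption
  have hUVW (i : Bool) : U ∩ V ⊆ W i := by
    cases i <;> simp [W, inter_subset_left, inter_subset_right]
  obtain ⟨t, ht0, htmono, ⟨N, htN⟩, hsub⟩ := exists_monotone_Icc_subset_open_cover_unitInterval
    (c := fun i => γ ⁻¹' W i) (fun i => (hWo i).preimage γ.continuous)
    (fun s _ => by simpa [W, or_comm] using hcover.ge (mem_univ (γ s)))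
  choose i hi using hsub
  have hγW (m : ℕ) (s : I) : γ.subpath (t m) (t (m + 1)) s ∈ W (i m) := by
    obtain ⟨r, hr, hrs⟩ := Path.range_subpath_of_le γ _ _ (htmono m.le_succ) ▸ mem_range_self s
    exact hrs ▸ hi m hr
  have hbase : γ (t 0) ∈ U ∩ V := by rwa [ht0, γ.source]
  -- `W (i m) ∩ W (i (m + 1))` is `U`, `V` or `U ∩ V`, and contains both `γ (t 0)` and
  -- `γ (t (m + 1))`.
  have hjoin (m : ℕ) : JoinedIn (W (i m) ∩ W (i (m + 1))) (γ (t 0)) (γ (t (m + 1))) :=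
    (isPathConnected_cond_inter_cond hU.isPathConnected hV.isPathConnected hUV _ _).joinedIn _
      ⟨hUVW _ hbase, hUVW _ hbase⟩ _
      ⟨hi m ⟨htmono m.le_succ, le_rfl⟩, hi (m + 1) ⟨le_rfl, htmono (m + 1).le_succ⟩⟩
  let β : ∀ m, Path (γ (t 0)) (γ (t m))
    | 0 => Path.refl _
    | m + 1 => (hjoin m).somePath
  have hβ : ∀ m s, β m s ∈ W (i m)
    | 0, _ => hUVW _ hbase
    | m + 1, s => ((hjoin m).somePath_mem s).2
  have hβ' (m : ℕ) (s : I) : β (m + 1) s ∈ W (i m) := ((hjoin m).somePath_mem s).1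
  exact Path.homotopic_of_homotopic_subpath (hWsc (i N)) (fun _ => hUVW _ hx₀) ht0
    (htN _ N.le_succ) (hβ' N) ((Path.Homotopic.refl_trans _).symm.trans
      (Path.homotopic_trans_subpath_of_forall_mem γ t (fun m => hWsc (i m)) hγW β hβ hβ' _))

theorem simplyConnectedSpace_of_isOpen_cover (hUo : IsOpen U) (hVo : IsOpen V)
    (hcover : U ∪ V = univ) (hU : IsSimplyConnected U) (hV : IsSimplyConnected V)
    (hUV : IsPathConnected (U ∩ V)) : SimplyConnectedSpace X := by
  obtain ⟨x₀, hx₀, -⟩ := id hUV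
  have : PathConnectedSpace X := pathConnectedSpace_iff_univ.2 <|
    hcover ▸ hU.isPathConnected.union hV.isPathConnected ⟨x₀, hx₀⟩
  exact simplyConnectedSpace_of_homotopic_refl x₀
    (homotopic_refl_of_isOpen_cover hUo hVo hcover hU hV hUV hx₀)

end VanKampen

section Sphere

variable {E : Type*} [NormedAddCommGroup E] [InnerProductSpace ℝ E]

theorem isSimplyConnected_compl_singleton_sphere (v : sphere (0 : E) 1) :
    IsSimplyConnected ({v}ᶜ : Set (sphere (0 : E) 1)) := by
  have hv := norm_eq_of_mem_sphere v
  rw [← range_stereographic_symm hv v.2, ← image_univ,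
    (isOpenEmbedding_stereographic_symm hv).isEmbedding.isSimplyConnected_image]
  exact (Homeomorph.Set.univ _).toHomotopyEquiv.simplyConnectedSpace

theorem isPathConnected_compl_pair_sphere {v : sphere (0 : E) 1}
    (hE : 1 < Module.rank ℝ (ℝ ∙ (v : E))ᗮ) :
    IsPathConnected ({v}ᶜ ∩ {-v}ᶜ : Set (sphere (0 : E) 1)) := by
  have hv := norm_eq_of_mem_sphere v
  let f := (stereographic hv).symm
  have hf0 : f 0 = -v := by
    rw [← stereographic_apply_neg v]
    exact (stereographic hv).left_inv (by simpa using (ne_neg_of_mem_unit_sphere ℝ v).symm)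
  have : {v}ᶜ ∩ {-v}ᶜ = f '' {0}ᶜ := by
    rw [image_compl_eq_range_sdiff_image (isOpenEmbedding_stereographic_symm hv).injective,
      range_stereographic_symm hv v.2, image_singleton, hf0, sdiff_eq]
  rw [this]
  exact (isPathConnected_compl_singleton_of_one_lt_rank hE 0).image
    (isOpenEmbedding_stereographic_symm hv).continuous

theorem one_lt_rank_orthogonal_span_singleton [FiniteDimensional ℝ E] (hE : 3 ≤ finrank ℝ E)
    {v : E} (hv : v ≠ 0) : 1 < Module.rank ℝ (ℝ ∙ v)ᗮ := by
  have := (ℝ ∙ v).finrank_add_finrank_orthogonal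
  rw [finrank_span_singleton hv] at this
  rw [← finrank_eq_rank]
  exact_mod_cast (by omega : 1 < finrank ℝ (ℝ ∙ v)ᗮ)

theorem simplyConnectedSpace_sphere [FiniteDimensional ℝ E] (hE : 3 ≤ finrank ℝ E) :
    SimplyConnectedSpace (sphere (0 : E) 1) := by
  have : Nontrivial E := Module.nontrivial_of_finrank_pos (R := ℝ) (by omega)
  obtain ⟨v, hv⟩ := NormedSpace.sphere_nonempty (x := (0 : E)) (r := 1) |>.2 zero_le_one
  let N : sphere (0 : E) 1 := ⟨v, hv⟩
  refine simplyConnectedSpace_of_isOpen_cover (U := {N}ᶜ) (V := {-N}ᶜ) isOpen_compl_singleton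
    isOpen_compl_singleton ?_ (isSimplyConnected_compl_singleton_sphere N)
    (isSimplyConnected_compl_singleton_sphere (-N)) (isPathConnected_compl_pair_sphere
      (one_lt_rank_orthogonal_span_singleton hE (ne_zero_of_mem_unit_sphere N)))
  rw [← compl_inter, singleton_inter_eq_empty.2 (ne_neg_of_mem_unit_sphere ℝ N : N ∉ {-N}),
    compl_empty]

end Sphere

section UnitSphereOffAxes

variable (E F : Type*) [NormedAddCommGroup E] [NormedAddCommGroup F]

def unitSphereOffAxes : Set (WithLp 2 (E × F)) := {z | ‖z‖ = 1 ∧ z.fst ≠ 0 ∧ z.snd ≠ 0}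

variable {E F}

theorem WithLp.norm_snd_eq_sqrt {z : WithLp 2 (E × F)} (hz : ‖z‖ = 1) :
    ‖z.snd‖ = √(1 - ‖z.fst‖ ^ 2) := by
  have h := WithLp.prod_norm_sq_eq_of_L2 z
  rw [hz, one_pow] at h
  rw [h, add_sub_cancel_left, Real.sqrt_sq (norm_nonneg _)]

theorem norm_fst_mem_Ioo_of_mem_unitSphereOffAxes {z : WithLp 2 (E × F)}
    (hz : z ∈ unitSphereOffAxes E F) : ‖z.fst‖ ∈ Ioo (0 : ℝ) 1 := by
  have h := norm_pos_iff.2 hz.2.2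
  rw [WithLp.norm_snd_eq_sqrt hz.1, Real.sqrt_pos] at h
  exact ⟨norm_pos_iff.2 hz.2.1, by nlinarith [norm_nonneg z.fst]⟩

variable [NormedSpace ℝ E] [NormedSpace ℝ F]

theorem toLp_smul_sqrt_smul_mem_unitSphereOffAxes {u : E} {w : F} (hu : ‖u‖ = 1)
    (hw : ‖w‖ = 1) {t : ℝ} (ht : t ∈ Ioo (0 : ℝ) 1) :
    WithLp.toLp 2 (t • u, √(1 - t ^ 2) • w) ∈ unitSphereOffAxes E F := by
  have hs : 0 < 1 - t ^ 2 := by nlinarith [ht.1, ht.2]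
  have h := WithLp.prod_norm_sq_eq_of_L2 (WithLp.toLp 2 (t • u, √(1 - t ^ 2) • w))
  simp only [WithLp.toLp_fst, WithLp.toLp_snd, norm_smul, hu, hw, mul_one, Real.norm_eq_abs,
    sq_abs, Real.sq_sqrt hs.le, add_sub_cancel] at h
  refine ⟨(pow_eq_one_iff_of_nonneg (norm_nonneg _) two_ne_zero).1 h, ?_, ?_⟩
  · exact smul_ne_zero ht.1.ne' (norm_ne_zero_iff.1 (hu ▸ one_ne_zero))
  · exact smul_ne_zero (Real.sqrt_pos.2 hs).ne' (norm_ne_zero_iff.1 (hw ▸ one_ne_zero))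

def unitSphereOffAxesHomeomorph :
    unitSphereOffAxes E F ≃ₜ sphere (0 : E) 1 × sphere (0 : F) 1 × Ioo (0 : ℝ) 1 where
  toFun z := (⟨normalize z.1.fst, by simpa using z.2.2.1⟩,
    ⟨normalize z.1.snd, by simpa using z.2.2.2⟩,
    ⟨‖z.1.fst‖, norm_fst_mem_Ioo_of_mem_unitSphereOffAxes z.2⟩)
  invFun x := ⟨WithLp.toLp 2 ((x.2.2 : ℝ) • (x.1 : E), √(1 - (x.2.2 : ℝ) ^ 2) • (x.2.1 : F)),
    toLp_smul_sqrt_smul_mem_unitSphereOffAxes (norm_eq_of_mem_sphere x.1)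
      (norm_eq_of_mem_sphere x.2.1) x.2.2.2⟩
  left_inv z := by
    ext
    simp only [← WithLp.norm_snd_eq_sqrt z.2.1, norm_smul_normalize]
    rfl
  right_inv := by
    rintro ⟨u, w, t⟩
    have hs : 0 < √(1 - (t : ℝ) ^ 2) := Real.sqrt_pos.2 (by nlinarith [t.2.1, t.2.2])
    simp only [Prod.mk.injEq, Subtype.ext_iff, WithLp.toLp_fst, WithLp.toLp_snd]
    refine ⟨?_, ?_, ?_⟩
    · rw [normalize_smul_of_pos t.2.1, normalize_eq_self_of_norm_eq_one (norm_eq_of_mem_sphere u)]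
    · rw [normalize_smul_of_pos hs, normalize_eq_self_of_norm_eq_one (norm_eq_of_mem_sphere w)]
    · rw [norm_smul, norm_eq_of_mem_sphere u, mul_one, Real.norm_of_nonneg t.2.1.le]
  continuous_toFun := by
    simp only [NormedSpace.normalize]
    fun_prop (disch := intro z; simp [z.2.2.1, z.2.2.2])

end UnitSphereOffAxes

namespace EuclideanSpace

variable {m a b : ℕ}

def finAddEquivWithLpProd (h : m = a + b) :
    EuclideanSpace ℝ (Fin m) ≃ₗᵢ[ℝ]
      WithLp 2 (EuclideanSpace ℝ (Fin a) × EuclideanSpace ℝ (Fin b)) :=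
  (LinearIsometryEquiv.piLpCongrLeft 2 ℝ ℝ ((finCongr h).trans finSumFinEquiv.symm)).trans
    (PiLp.sumPiLpEquivProdLpPiLp 2 _)

theorem finAddEquivWithLpProd_fst_apply (h : m = a + b) (v : EuclideanSpace ℝ (Fin m))
    (i : Fin a) : (finAddEquivWithLpProd h v).fst i = v ⟨i, by omega⟩ :=
  rfl

theorem finAddEquivWithLpProd_snd_apply (h : m = a + b) (v : EuclideanSpace ℝ (Fin m))
    (j : Fin b) : (finAddEquivWithLpProd h v).snd j = v ⟨a + j, by omega⟩ :=
  rfl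

theorem finAddEquivWithLpProd_fst_eq_zero_iff (h : m = a + b) (v : EuclideanSpace ℝ (Fin m)) :
    (finAddEquivWithLpProd h v).fst = 0 ↔ ∀ k : Fin m, (k : ℕ) < a → v k = 0 := by
  refine ⟨fun h0 k hk => ?_, fun hv => ?_⟩
  · simpa [finAddEquivWithLpProd_fst_apply] using congr($h0 ⟨k, hk⟩)
  · ext i
    simpa [finAddEquivWithLpProd_fst_apply] using hv _ i.2

theorem finAddEquivWithLpProd_snd_eq_zero_iff (h : m = a + b) (v : EuclideanSpace ℝ (Fin m)) :
    (finAddEquivWithLpProd h v).snd = 0 ↔ ∀ k : Fin m, a ≤ (k : ℕ) → v k = 0 := by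
  refine ⟨fun h0 k hk => ?_, fun hv => ?_⟩
  · simpa [finAddEquivWithLpProd_snd_apply, Nat.add_sub_cancel' hk] using
      congr($h0 ⟨k - a, by omega⟩)
  · ext j
    simpa [finAddEquivWithLpProd_snd_apply] using hv _ (by simp)

end EuclideanSpace

theorem mem_Omega_iff {n p q : ℕ} (h : n + 1 = p + 1 + (q + 1))
    (v : EuclideanSpace ℝ (Fin (n + 1))) :
    v ∈ Omega n p ↔ EuclideanSpace.finAddEquivWithLpProd h v ∈ unitSphereOffAxes _ _ := by
  simp only [Omega, greatSphereP, greatSphereQ, unitSphereOffAxes, mem_sdiff, mem_union,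
    mem_ofPred_eq, LinearIsometryEquiv.norm_map, ne_eq,
    EuclideanSpace.finAddEquivWithLpProd_fst_eq_zero_iff,
    EuclideanSpace.finAddEquivWithLpProd_snd_eq_zero_iff]
  tauto

def omegaHomeomorph {n p q : ℕ} (h : n + 1 = p + 1 + (q + 1)) :
    Omega n p ≃ₜ sphere (0 : EuclideanSpace ℝ (Fin (p + 1))) 1 ×
      sphere (0 : EuclideanSpace ℝ (Fin (q + 1))) 1 × Ioo (0 : ℝ) 1 :=
  ((EuclideanSpace.finAddEquivWithLpProd h).toHomeomorph.subtype (mem_Omega_iff h)).trans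
    unitSphereOffAxesHomeomorph

theorem omega_simplyConnected (p q : ℕ) (hp : 2 ≤ p) (hq : 2 ≤ q)
    (n : ℕ) (hn : n = p + q + 1) :
    SimplyConnectedSpace ↥(Omega n p) := by
  have : SimplyConnectedSpace (sphere (0 : EuclideanSpace ℝ (Fin (p + 1))) 1) :=
    simplyConnectedSpace_sphere (by simp; omega)
  have : SimplyConnectedSpace (sphere (0 : EuclideanSpace ℝ (Fin (q + 1))) 1) :=
    simplyConnectedSpace_sphere (by simp; omega)
  have : ContractibleSpace (Ioo (0 : ℝ) 1) :=
    (convex_Ioo 0 1).contractibleSpace (nonempty_Ioo.2 one_pos)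
  exact (omegaHomeomorph (q := q) (by omega)).toHomotopyEquiv.simplyConnectedSpace
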